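/- arXiv:1703.01937 — 3 statements merged into one kernel-verified Lean document; each statement's English description precedes it below -/
import Mathlib

section
/- Let β ∈ [0, 1), let Π be a row-stochastic matrix on a nonempty finite set Ω, let ν be a Borel probability measure on ℝ with finite first moment with g(a) = ∫ max(a − c, 0) dν(c), and for a revenue function θ̂ : Ω → ℝ let c̄*(θ̂) denote the unique fixed point of the cutoff operator S associated with θ̂. Then the equilibrium cutoffs are monotone and Lipschitz in the revenue function: if θ̂(ω) ≤ θ̂′(ω) for all ω, then c̄*(θ̂)(ω) ≤ c̄*(θ̂′)(ω) for all ω; and for arbitrary θ̂, θ̂′, ‖c̄*(θ̂) − c̄*(θ̂′)‖ ≤ ‖θ̂ − θ̂′‖ / (1 − β) in the sup norm. -/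
open MeasureTheory Finset

/-- The expected value of the option to stay at cutoff `a`: `g(a) = ∫ max(a − c, 0) dν(c)`. -/
noncomputable def gfun (ν : Measure ℝ) (a : ℝ) : ℝ := ∫ c, max (a - c) 0 ∂ν

/-- The cutoff operator `S`: `(S x)(ω) = θ̂(ω) + β Σ_{ω'} Π(ω,ω') g(x(ω'))`. -/
noncomputable def cutoffOp {Ω : Type*} [Fintype Ω] (β : ℝ) (P : Ω → Ω → ℝ) (θhat : Ω → ℝ)
    (ν : Measure ℝ) (x : Ω → ℝ) (ω : Ω) : ℝ :=
  θhat ω + β * ∑ ω', P ω ω' * gfun ν (x ω')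

/-!
Pointwise `max (a - c) 0 - max (b - c) 0 ≤ max (a - b) 0`, so integrating against the
probability measure `ν` gives `g a - g b ≤ max (a - b) 0`, a one-sided bound that contains both
the monotonicity and the 1-Lipschitz property of `g`. Averaging over a row of `Π` preserves it,
so the difference `d = c̄ - c̄'` of two fixed points satisfies `d ω ≤ (θ̂ ω - θ̂' ω) + β ‖d⁺‖` and
`|d ω| ≤ |θ̂ ω - θ̂' ω| + β ‖d‖`. As `β < 1`, the first forces `‖d⁺‖ = 0` when `θ̂ ≤ θ̂'`,
and the second gives `‖d‖ ≤ ‖θ̂ - θ̂'‖ / (1 - β)`.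
-/

lemma integrable_max_sub_zero (ν : Measure ℝ) [IsFiniteMeasure ν]
    (hν : Integrable (fun c : ℝ => c) ν) (a : ℝ) :
    Integrable (fun c => max (a - c) 0) ν :=
  ((integrable_const a).sub hν).pos_part

lemma gfun_sub_le_max_sub_zero (ν : Measure ℝ) [IsProbabilityMeasure ν]
    (hν : Integrable (fun c : ℝ => c) ν) (a b : ℝ) :
    gfun ν a - gfun ν b ≤ max (a - b) 0 := by
  have ha := integrable_max_sub_zero ν hν a
  have hb := integrable_max_sub_zero ν hν b
  calc gfun ν a - gfun ν b = ∫ c, (max (a - c) 0 - max (b - c) 0) ∂ν :=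
        (integral_sub ha hb).symm
    _ ≤ ∫ _c, max (a - b) 0 ∂ν :=
        integral_mono (ha.sub hb) (integrable_const _) fun c => by
          simpa using max_sub_max_le_max (a - c) 0 (b - c) 0
    _ = max (a - b) 0 := by simp

section StochasticRow

variable {Ω : Type*} [Fintype Ω] {p : Ω → ℝ}

lemma sum_mul_le_of_forall_le (hp0 : ∀ ω, 0 ≤ p ω) (hp1 : ∑ ω, p ω = 1) {f : Ω → ℝ} {B : ℝ}
    (hf : ∀ ω, f ω ≤ B) : ∑ ω, p ω * f ω ≤ B :=
  calc ∑ ω, p ω * f ω ≤ ∑ ω, p ω * B :=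
        sum_le_sum fun ω _ => mul_le_mul_of_nonneg_left (hf ω) (hp0 ω)
    _ = B := by rw [← sum_mul, hp1, one_mul]

lemma sum_mul_gfun_sub_le (ν : Measure ℝ) [IsProbabilityMeasure ν]
    (hν : Integrable (fun c : ℝ => c) ν) (hp0 : ∀ ω, 0 ≤ p ω) (hp1 : ∑ ω, p ω = 1)
    {x y : Ω → ℝ} {B : ℝ} (hB : 0 ≤ B) (hxy : ∀ ω, x ω - y ω ≤ B) :
    ∑ ω, p ω * gfun ν (x ω) - ∑ ω, p ω * gfun ν (y ω) ≤ B := by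
  rw [← sum_sub_distrib]
  simp_rw [← mul_sub]
  exact sum_mul_le_of_forall_le hp0 hp1 fun ω =>
    (gfun_sub_le_max_sub_zero ν hν _ _).trans (max_le (hxy ω) hB)

end StochasticRow

section CutoffOp

variable {Ω : Type*} [Fintype Ω] {β : ℝ} {P : Ω → Ω → ℝ} {θhat θhat' x y : Ω → ℝ}
  {ν : Measure ℝ} [IsProbabilityMeasure ν]

lemma cutoffOp_sub_le (hν : Integrable (fun c : ℝ => c) ν) (hβ0 : 0 ≤ β)
    (hP0 : ∀ ω ω', 0 ≤ P ω ω') (hP1 : ∀ ω, ∑ ω', P ω ω' = 1) {B : ℝ} (hB : 0 ≤ B)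
    (hxy : ∀ ω, x ω - y ω ≤ B) (ω : Ω) :
    cutoffOp β P θhat ν x ω - cutoffOp β P θhat' ν y ω ≤ θhat ω - θhat' ω + β * B := by
  have hsum := sum_mul_gfun_sub_le ν hν (hP0 ω) (hP1 ω) hB hxy
  have hβsum := mul_le_mul_of_nonneg_left hsum hβ0
  simp only [cutoffOp]
  linarith

lemma abs_cutoffOp_sub_le (hν : Integrable (fun c : ℝ => c) ν) (hβ0 : 0 ≤ β)
    (hP0 : ∀ ω ω', 0 ≤ P ω ω') (hP1 : ∀ ω, ∑ ω', P ω ω' = 1) {B : ℝ}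
    (hxy : ∀ ω, |x ω - y ω| ≤ B) (ω : Ω) :
    |cutoffOp β P θhat ν x ω - cutoffOp β P θhat' ν y ω| ≤ |θhat ω - θhat' ω| + β * B := by
  have hB : 0 ≤ B := (abs_nonneg _).trans (hxy ω)
  have hle := cutoffOp_sub_le (θhat := θhat) (θhat' := θhat') hν hβ0 hP0 hP1 hB
    (fun ω => (le_abs_self _).trans (hxy ω)) ω
  have hge := cutoffOp_sub_le (θhat := θhat') (θhat' := θhat) (x := y) (y := x)
    hν hβ0 hP0 hP1 hB
    (fun ω => (le_abs_self _).trans ((abs_sub_comm _ _).trans_le (hxy ω))) ω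
  rw [abs_le]
  constructor <;> linarith [le_abs_self (θhat ω - θhat' ω), neg_abs_le (θhat ω - θhat' ω)]

end CutoffOp

lemma norm_le_div_one_sub_of_forall_abs_le {Ω : Type*} [Fintype Ω] {v : Ω → ℝ} {a β : ℝ}
    (ha : 0 ≤ a) (hβ0 : 0 ≤ β) (hβ1 : β < 1) (hv : ∀ ω, |v ω| ≤ a + β * ‖v‖) :
    ‖v‖ ≤ a / (1 - β) := by
  have hle : ‖v‖ ≤ a + β * ‖v‖ :=
    (pi_norm_le_iff_of_nonneg (by positivity)).2 fun ω => (Real.norm_eq_abs _).trans_le (hv ω)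
  rw [le_div_iff₀ (by linarith)]
  linarith

theorem cutoff_fixed_point_monotone_and_lipschitz_in_revenue_general
    {Ω : Type*} [Fintype Ω]
    (β : ℝ) (hβ0 : 0 ≤ β) (hβ1 : β < 1)
    (P : Ω → Ω → ℝ) (hP0 : ∀ ω ω', 0 ≤ P ω ω') (hP1 : ∀ ω, ∑ ω', P ω ω' = 1)
    (ν : Measure ℝ) [IsProbabilityMeasure ν] (hν : Integrable (fun c : ℝ => c) ν)
    (θhat θhat' cbar cbar' : Ω → ℝ)
    (hfix : cutoffOp β P θhat ν cbar = cbar)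
    (hfix' : cutoffOp β P θhat' ν cbar' = cbar') :
    ((∀ ω, θhat ω ≤ θhat' ω) → ∀ ω, cbar ω ≤ cbar' ω) ∧
    ‖cbar - cbar'‖ ≤ ‖θhat - θhat'‖ / (1 - β) := by
  have hnorm_apply {v : Ω → ℝ} (ω : Ω) : |v ω| ≤ ‖v‖ := norm_le_pi_norm v ω
  constructor
  · intro hθ
    set excess : Ω → ℝ := fun ω => max (cbar ω - cbar' ω) 0
    have hexcess_le (ω : Ω) : cbar ω - cbar' ω ≤ ‖excess‖ :=
      (le_max_left _ _).trans ((le_abs_self _).trans (hnorm_apply (v := excess) ω))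
    have hexcess : ‖excess‖ ≤ 0 / (1 - β) := by
      refine norm_le_div_one_sub_of_forall_abs_le le_rfl hβ0 hβ1 fun ω => ?_
      have hstep := cutoffOp_sub_le (θhat := θhat) (θhat' := θhat') hν hβ0 hP0 hP1
        (norm_nonneg _) hexcess_le ω
      rw [hfix, hfix'] at hstep
      rw [abs_of_nonneg (le_max_right _ _)]
      exact max_le (by linarith [hθ ω]) (by positivity)
    rw [zero_div] at hexcess
    exact fun ω => sub_nonpos.1 ((hexcess_le ω).trans hexcess)
  · refine norm_le_div_one_sub_of_forall_abs_le (norm_nonneg _) hβ0 hβ1 fun ω => ?_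
    have hstep := abs_cutoffOp_sub_le (θhat := θhat) (θhat' := θhat') hν hβ0 hP0 hP1
      (fun ω => hnorm_apply (v := cbar - cbar') ω) ω
    rw [hfix, hfix'] at hstep
    exact hstep.trans (add_le_add_left (hnorm_apply (v := θhat - θhat') ω) _)

/-- The equilibrium cutoffs (the fixed points of the cutoff operator) are
monotone in the revenue function `θ̂`, and Lipschitz in it with constant `1/(1 − β)` in the
sup norm. -/
theorem cutoff_fixed_point_monotone_and_lipschitz_in_revenue
    {Ω : Type*} [Fintype Ω] [Nonempty Ω]
    (β : ℝ) (hβ0 : 0 ≤ β) (hβ1 : β < 1)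
    (P : Ω → Ω → ℝ) (hP0 : ∀ ω ω', 0 ≤ P ω ω') (hP1 : ∀ ω, ∑ ω', P ω ω' = 1)
    (ν : Measure ℝ) [IsProbabilityMeasure ν] (hν : Integrable (fun c : ℝ => c) ν)
    (θhat θhat' cbar cbar' : Ω → ℝ)
    (hfix : cutoffOp β P θhat ν cbar = cbar)
    (hfix' : cutoffOp β P θhat' ν cbar' = cbar') :
    ((∀ ω, θhat ω ≤ θhat' ω) → ∀ ω, cbar ω ≤ cbar' ω) ∧
    ‖cbar - cbar'‖ ≤ ‖θhat - θhat'‖ / (1 - β) :=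
  cutoff_fixed_point_monotone_and_lipschitz_in_revenue_general β hβ0 hβ1 P hP0 hP1 ν hν θhat θhat'
    cbar cbar' hfix hfix'
end

section
/- Let Ω be a nonempty finite set, let Π be an irreducible row-stochastic matrix on Ω, let τ : Ω → (0, 1) be staying probabilities with 0 < τ(ω) < 1 for every ω, and let η : Ω → [0, ∞) be not identically zero. Then the unique μ : Ω → [0, ∞) satisfying the stationarity condition μ(ω′) = Σ_ω Π(ω, ω′) τ(ω) μ(ω) + η(ω′) for all ω′ is strictly positive: μ(ω) > 0 for every ω ∈ Ω. In particular, there is a positive mass of sellers in every state, so beliefs conditional on the state are well-defined in every state. -/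
/-!
Mass that sits in a state survives with positive probability and is carried along every
transition of positive probability, so the set of states with positive mass is closed under
the positive entries of `Π`. It contains every state with positive inflow, and by
irreducibility a set closed under the positive entries of `Π` is either empty or everything.
-/

open Finset

namespace Matrix

variable {n R : Type*} [Ring R] [LinearOrder R] {A : Matrix n n R}

theorem IsIrreducible.mem_of_forall_pos_mem (hA : IsIrreducible A) {S : Set n}
    (hS : ∀ i j, i ∈ S → 0 < A i j → j ∈ S) {i : n} (hi : i ∈ S) (j : n) : j ∈ S := by
  let := toQuiver A
  obtain ⟨p, -⟩ := hA.connected i j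
  induction p with
  | nil => exact hi
  | cons _ e ih => exact hS _ _ ih e.down

end Matrix

section StationaryMass

variable {Ω : Type*} [Fintype Ω] {P : Matrix Ω Ω ℝ} {τ η μ : Ω → ℝ}
  (hP0 : ∀ ω ω', 0 ≤ P ω ω') (hτ : ∀ ω, 0 < τ ω) (hμ0 : ∀ ω, 0 ≤ μ ω)
  (hμ : ∀ ω', μ ω' = ∑ ω, P ω ω' * τ ω * μ ω + η ω')
include hP0 hτ hμ0 hμ

theorem inflow_le_stationary_mass (ω' : Ω) : η ω' ≤ μ ω' := by
  rw [hμ ω', le_add_iff_nonneg_left]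
  exact sum_nonneg fun ω _ => mul_nonneg (mul_nonneg (hP0 ω ω') (hτ ω).le) (hμ0 ω)

theorem stationary_mass_pos_of_transition (hη0 : ∀ ω, 0 ≤ η ω) {ω ω' : Ω}
    (hμω : 0 < μ ω) (hPω : 0 < P ω ω') : 0 < μ ω' := by
  have hsum : P ω ω' * τ ω * μ ω ≤ ∑ w, P w ω' * τ w * μ w :=
    single_le_sum (fun w _ => mul_nonneg (mul_nonneg (hP0 w ω') (hτ w).le) (hμ0 w))
      (mem_univ ω)
  rw [hμ ω']
  linarith [mul_pos (mul_pos hPω (hτ ω)) hμω, hη0 ω']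

end StationaryMass

theorem stationary_mass_pos_of_irreducible_general
    {Ω : Type*} [Fintype Ω] [DecidableEq Ω]
    (P : Matrix Ω Ω ℝ) (hP0 : ∀ ω ω', 0 ≤ P ω ω')
    (hPirr : ∀ ω ω', ∃ n : ℕ, 1 ≤ n ∧ 0 < (P ^ n) ω ω')
    (τ : Ω → ℝ) (hτ : ∀ ω, 0 < τ ω ∧ τ ω < 1)
    (η : Ω → ℝ) (hη0 : ∀ ω, 0 ≤ η ω) (hη : ∃ ω, η ω ≠ 0)
    (μ : Ω → ℝ) (hμ0 : ∀ ω, 0 ≤ μ ω)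
    (hμ : ∀ ω', μ ω' = ∑ ω, P ω ω' * τ ω * μ ω + η ω') :
    ∀ ω, 0 < μ ω := by
  have hτ0 : ∀ ω, 0 < τ ω := fun ω => (hτ ω).1
  have hirr : P.IsIrreducible := (Matrix.isIrreducible_iff_exists_pow_pos hP0).2 hPirr
  obtain ⟨ω₀, hω₀⟩ := hη
  have hμω₀ : 0 < μ ω₀ :=
    ((hη0 ω₀).lt_of_ne hω₀.symm).trans_le (inflow_le_stationary_mass hP0 hτ0 hμ0 hμ ω₀)
  exact hirr.mem_of_forall_pos_mem (S := {ω | 0 < μ ω})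
    (fun _ _ => stationary_mass_pos_of_transition hP0 hτ0 hμ0 hμ hη0) hμω₀

/-- If `Π` is an irreducible row-stochastic matrix on a nonempty finite set
`Ω`, `τ : Ω → (0,1)`, and `η : Ω → [0,∞)` is not identically zero, then any nonnegative `μ`
satisfying the stationarity condition `μ(ω') = Σ_ω Π(ω,ω') τ(ω) μ(ω) + η(ω')` is strictly
positive in every state: there is a positive mass of sellers in every state. -/
theorem stationary_mass_pos_of_irreducible
    {Ω : Type*} [Fintype Ω] [DecidableEq Ω] [Nonempty Ω]
    (P : Matrix Ω Ω ℝ) (hP0 : ∀ ω ω', 0 ≤ P ω ω') (hP1 : ∀ ω, ∑ ω', P ω ω' = 1)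
    (hPirr : ∀ ω ω', ∃ n : ℕ, 1 ≤ n ∧ 0 < (P ^ n) ω ω')
    (τ : Ω → ℝ) (hτ : ∀ ω, 0 < τ ω ∧ τ ω < 1)
    (η : Ω → ℝ) (hη0 : ∀ ω, 0 ≤ η ω) (hη : ∃ ω, η ω ≠ 0)
    (μ : Ω → ℝ) (hμ0 : ∀ ω, 0 ≤ μ ω)
    (hμ : ∀ ω', μ ω' = ∑ ω, P ω ω' * τ ω * μ ω + η ω') :
    ∀ ω, 0 < μ ω :=
  stationary_mass_pos_of_irreducible_general P hP0 hPirr τ hτ η hη0 hη μ hμ0 hμ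
end

section
/- In any stationary equilibrium (c̄_l, c̄_h, μ_l, μ_h) of the model, the stationary mass of each type is strictly positive in every state: μ_θ(ω) > 0 for every ω ∈ Ω and each θ ∈ {l, h}. Consequently the market belief is strictly interior: θ_l < θ̂(ω) < θ_h for every ω ∈ Ω. -/
/-!
Entry is positive somewhere, and from a state with positive mass the surviving mass
`F(c̄(ω)) μ(ω) > 0` flows along every positive transition. By irreducibility every state is
reached, so both masses are positive everywhere, and the belief, a proper convex combination
of `θ_l` and `θ_h`, lies strictly between them.
-/

open MeasureTheory Finset

/-- The cumulative distribution function of `ν`: `F(a) = ν((−∞, a])`. -/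
noncomputable def cdf (ν : Measure ℝ) (a : ℝ) : ℝ := (ν (Set.Iic a)).toReal

/-- The market belief about average seller quality in state `ω`:
`θ̂(ω) = θ_l + (θ_h − θ_l) μ_h(ω) / (μ_l(ω) + μ_h(ω))`. -/
noncomputable def belief {Ω : Type*} (θl θh : ℝ) (μl μh : Ω → ℝ) (ω : Ω) : ℝ :=
  θl + (θh - θl) * μh ω / (μl ω + μh ω)

/-- A stationary equilibrium `(c̄_l, c̄_h, μ_l, μ_h)`: the masses `μ_θ ≥ 0` satisfy the
stationarity condition, beliefs are consistent (`μ_l + μ_h > 0` and the market belief is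
`belief θl θh μl μh`), and sellers exit optimally:
`c̄_θ(ω) = θ̂(ω) + β Σ_{ω'} Π_θ(ω,ω') g(c̄_θ(ω'))`. -/
def IsStationaryEquilibrium {Ω : Type*} [Fintype Ω]
    (β θl θh : ℝ) (Pl Ph : Ω → Ω → ℝ) (ηl ηh : Ω → ℝ) (ν : Measure ℝ)
    (cl ch μl μh : Ω → ℝ) : Prop :=
  (∀ ω, 0 ≤ μl ω) ∧ (∀ ω, 0 ≤ μh ω) ∧
  (∀ ω', μl ω' = ∑ ω, Pl ω ω' * cdf ν (cl ω) * μl ω + ηl ω') ∧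
  (∀ ω', μh ω' = ∑ ω, Ph ω ω' * cdf ν (ch ω) * μh ω + ηh ω') ∧
  (∀ ω, 0 < μl ω + μh ω) ∧
  (∀ ω, cl ω = belief θl θh μl μh ω + β * ∑ ω', Pl ω ω' * gfun ν (cl ω')) ∧
  (∀ ω, ch ω = belief θl θh μl μh ω + β * ∑ ω', Ph ω ω' * gfun ν (ch ω'))

namespace Matrix

variable {n R : Type*} [Ring R] [LinearOrder R]

theorem IsIrreducible.forall_of_isClosed {A : Matrix n n R} (hA : A.IsIrreducible)
    {S : n → Prop} (hS : ∀ i j, 0 < A i j → S i → S j) {i : n} (hi : S i) (j : n) : S j := by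
  let := toQuiver A
  obtain ⟨p, -⟩ := hA.connected i j
  induction p with
  | nil => exact hi
  | cons _ e ih => exact hS _ _ e.down ih

end Matrix

theorem pos_of_stationary {Ω R : Type*} [Fintype Ω] [Ring R] [LinearOrder R]
    [IsStrictOrderedRing R] {P : Matrix Ω Ω R} (hP : P.IsIrreducible)
    {μ η F : Ω → R} (hμ0 : ∀ ω, 0 ≤ μ ω) (hη0 : ∀ ω, 0 ≤ η ω) (hη : ∃ ω, η ω ≠ 0)
    (hF : ∀ ω, 0 < F ω) (hstat : ∀ ω', μ ω' = ∑ ω, P ω ω' * F ω * μ ω + η ω') (ω : Ω) :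
    0 < μ ω := by
  have hterm_nonneg (w ω' : Ω) : 0 ≤ P w ω' * F w * μ w :=
    mul_nonneg (mul_nonneg (hP.nonneg w ω') (hF w).le) (hμ0 w)
  have hinflow_le (ω₀ ω' : Ω) : P ω₀ ω' * F ω₀ * μ ω₀ ≤ μ ω' := by
    rw [hstat ω']
    refine le_add_of_le_of_nonneg ?_ (hη0 ω')
    exact single_le_sum (f := fun w => P w ω' * F w * μ w)
      (fun w _ => hterm_nonneg w ω') (mem_univ ω₀)
  have hpropagate (ω₀ ω' : Ω) (hedge : 0 < P ω₀ ω') (hμ : 0 < μ ω₀) : 0 < μ ω' :=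
    (mul_pos (mul_pos hedge (hF ω₀)) hμ).trans_le (hinflow_le ω₀ ω')
  obtain ⟨ω₀, hω₀⟩ := hη
  have hentry : 0 < μ ω₀ := by
    rw [hstat ω₀]
    exact add_pos_of_nonneg_of_pos
      (sum_nonneg fun w _ => hterm_nonneg w ω₀)
      ((hη0 ω₀).lt_of_ne' hω₀)
  exact hP.forall_of_isClosed hpropagate hentry ω

theorem belief_mem_Ioo {Ω : Type*} {θl θh : ℝ} (hθ : θl < θh) {μl μh : Ω → ℝ} {ω : Ω}
    (hl : 0 < μl ω) (hh : 0 < μh ω) : belief θl θh μl μh ω ∈ Set.Ioo θl θh := by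
  have hw0 : 0 < μh ω / (μl ω + μh ω) := by positivity
  have hw1 : μh ω / (μl ω + μh ω) < 1 := (div_lt_one (by positivity)).2 (by linarith)
  have hgap : 0 < θh - θl := sub_pos.2 hθ
  rw [belief, mul_div_assoc]
  constructor
  · linarith [mul_pos hgap hw0]
  · linarith [mul_lt_of_lt_one_right hgap hw1]

theorem equilibrium_mass_pos_and_belief_strict_interior_general
    {Ω : Type*} [Fintype Ω] [DecidableEq Ω]
    (θl θh : ℝ) (hθ : θl < θh)
    (Pl Ph : Matrix Ω Ω ℝ)
    (hPl0 : ∀ ω ω', 0 ≤ Pl ω ω')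
    (hPh0 : ∀ ω ω', 0 ≤ Ph ω ω')
    (hPlirr : ∀ ω ω', ∃ n : ℕ, 1 ≤ n ∧ 0 < (Pl ^ n) ω ω')
    (hPhirr : ∀ ω ω', ∃ n : ℕ, 1 ≤ n ∧ 0 < (Ph ^ n) ω ω')
    (ηl ηh : Ω → ℝ) (hηl0 : ∀ ω, 0 ≤ ηl ω) (hηh0 : ∀ ω, 0 ≤ ηh ω)
    (hηl : ∃ ω, ηl ω ≠ 0) (hηh : ∃ ω, ηh ω ≠ 0)
    (ν : Measure ℝ)
    (hF01 : ∀ c : ℝ, 0 < cdf ν c ∧ cdf ν c < 1)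
    (β : ℝ)
    (cl ch μl μh : Ω → ℝ)
    (heq : IsStationaryEquilibrium β θl θh (fun ω ω' => Pl ω ω') (fun ω ω' => Ph ω ω')
      ηl ηh ν cl ch μl μh) :
    (∀ ω, 0 < μl ω ∧ 0 < μh ω) ∧
    (∀ ω, θl < belief θl θh μl μh ω ∧ belief θl θh μl μh ω < θh) := by
  obtain ⟨hμl0, hμh0, hstatl, hstath, -, -, -⟩ := heq
  have hl := pos_of_stationary ((Matrix.isIrreducible_iff_exists_pow_pos hPl0).2 hPlirr)
    hμl0 hηl0 hηl (fun ω => (hF01 (cl ω)).1) hstatl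
  have hh := pos_of_stationary ((Matrix.isIrreducible_iff_exists_pow_pos hPh0).2 hPhirr)
    hμh0 hηh0 hηh (fun ω => (hF01 (ch ω)).1) hstath
  exact ⟨fun ω => ⟨hl ω, hh ω⟩, fun ω => belief_mem_Ioo hθ (hl ω) (hh ω)⟩

/-- In any stationary equilibrium of the model, the stationary mass of each
type is strictly positive in every state, and consequently the market belief is strictly
interior: `θ_l < θ̂(ω) < θ_h` for every `ω`. -/
theorem equilibrium_mass_pos_and_belief_strict_interior
    {Ω : Type*} [Fintype Ω] [DecidableEq Ω] [Nonempty Ω]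
    (θl θh : ℝ) (hθl : 0 < θl) (hθ : θl < θh)
    (Pl Ph : Matrix Ω Ω ℝ)
    (hPl0 : ∀ ω ω', 0 ≤ Pl ω ω') (hPl1 : ∀ ω, ∑ ω', Pl ω ω' = 1)
    (hPh0 : ∀ ω ω', 0 ≤ Ph ω ω') (hPh1 : ∀ ω, ∑ ω', Ph ω ω' = 1)
    (hPlirr : ∀ ω ω', ∃ n : ℕ, 1 ≤ n ∧ 0 < (Pl ^ n) ω ω')
    (hPhirr : ∀ ω ω', ∃ n : ℕ, 1 ≤ n ∧ 0 < (Ph ^ n) ω ω')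
    (ηl ηh : Ω → ℝ) (hηl0 : ∀ ω, 0 ≤ ηl ω) (hηh0 : ∀ ω, 0 ≤ ηh ω)
    (hηl : ∃ ω, ηl ω ≠ 0) (hηh : ∃ ω, ηh ω ≠ 0)
    (ν : Measure ℝ) [IsProbabilityMeasure ν] (hint : Integrable (fun c : ℝ => c) ν)
    (hF : Continuous (cdf ν)) (hF01 : ∀ c : ℝ, 0 < cdf ν c ∧ cdf ν c < 1)
    (β : ℝ) (hβ0 : 0 < β) (hβ1 : β < 1)
    (cl ch μl μh : Ω → ℝ)
    (heq : IsStationaryEquilibrium β θl θh (fun ω ω' => Pl ω ω') (fun ω ω' => Ph ω ω')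
      ηl ηh ν cl ch μl μh) :
    (∀ ω, 0 < μl ω ∧ 0 < μh ω) ∧
    (∀ ω, θl < belief θl θh μl μh ω ∧ belief θl θh μl μh ω < θh) :=
  equilibrium_mass_pos_and_belief_strict_interior_general θl θh hθ Pl Ph hPl0 hPh0 hPlirr hPhirr ηl
    ηh hηl0 hηh0 hηl hηh ν hF01 β cl ch μl μh heq
end
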